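/- arXiv:1701.08831 — 7 statements merged into one kernel-verified Lean document; each statement's English description precedes it below -/
import Mathlib

section
/- For every fixed s in (0,1), the function t ↦ sin(ts/2)/sin(t/2) is monotone increasing on (0, 2π). -/
/-!
Substituting `x = t / 2`, it suffices that `x ↦ sin (s x) / sin x` is monotone on `(0, π)`. The
numerator of its derivative, `s cos (s x) sin x - cos x sin (s x)`, vanishes at `0` and has
derivative `(1 - s²) sin (s x) sin x ≥ 0` on `[0, π]`, so it is nonnegative there.
-/

open Real Set

section SinRatio

variable {s : ℝ}

lemma hasDerivAt_sin_mul_div_sin (s : ℝ) {x : ℝ} (hx : sin x ≠ 0) :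
    HasDerivAt (fun x => sin (s * x) / sin x)
      ((s * cos (s * x) * sin x - cos x * sin (s * x)) / sin x ^ 2) x := by
  have hsin : HasDerivAt (fun x => sin (s * x)) (cos (s * x) * s) x :=
    ((hasDerivAt_id x).const_mul s).sin.congr_deriv (by simp)
  exact (hsin.div (hasDerivAt_sin x) hx).congr_deriv (by ring)

lemma hasDerivAt_sin_ratio_numerator (s x : ℝ) :
    HasDerivAt (fun x => s * cos (s * x) * sin x - cos x * sin (s * x))
      ((1 - s ^ 2) * sin (s * x) * sin x) x := by
  have hmul : HasDerivAt (fun x => s * x) s x := by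
    simpa using (hasDerivAt_id x).const_mul s
  exact (((hmul.cos.const_mul s).mul (hasDerivAt_sin x)).sub
    ((hasDerivAt_cos x).mul hmul.sin)).congr_deriv (by ring)

lemma sin_ratio_numerator_nonneg (hs0 : 0 ≤ s) (hs1 : s ≤ 1) {x : ℝ} (hx : x ∈ Icc 0 π) :
    0 ≤ s * cos (s * x) * sin x - cos x * sin (s * x) := by
  have hmono : MonotoneOn (fun x => s * cos (s * x) * sin x - cos x * sin (s * x)) (Icc 0 π) := by
    refine monotoneOn_of_hasDerivWithinAt_nonneg (convex_Icc 0 π)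
      (fun y _ => (hasDerivAt_sin_ratio_numerator s y).continuousAt.continuousWithinAt)
      (fun y _ => (hasDerivAt_sin_ratio_numerator s y).hasDerivWithinAt) ?_
    intro y hy
    rw [interior_Icc] at hy
    obtain ⟨hy0, hyπ⟩ := Ioo_subset_Icc_self hy
    have hsy : s * y ∈ Icc 0 π := ⟨by positivity, by nlinarith⟩
    have hsin_sy := sin_nonneg_of_nonneg_of_le_pi hsy.1 hsy.2
    have hsin_y := sin_nonneg_of_nonneg_of_le_pi hy0 hyπ
    have hs2 : 0 ≤ 1 - s ^ 2 := by nlinarith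
    positivity
  simpa using hmono (left_mem_Icc.mpr pi_pos.le) hx hx.1

lemma monotoneOn_sin_mul_div_sin (hs0 : 0 ≤ s) (hs1 : s ≤ 1) :
    MonotoneOn (fun x => sin (s * x) / sin x) (Ioo 0 π) := by
  have hsin_pos : ∀ x ∈ Ioo 0 π, 0 < sin x := fun x hx => sin_pos_of_pos_of_lt_pi hx.1 hx.2
  refine monotoneOn_of_hasDerivWithinAt_nonneg (convex_Ioo 0 π)
    (f' := fun x => (s * cos (s * x) * sin x - cos x * sin (s * x)) / sin x ^ 2)
    (fun x hx =>
      (hasDerivAt_sin_mul_div_sin s (hsin_pos x hx).ne').continuousAt.continuousWithinAt)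
    (fun x hx => ?_) (fun x hx => ?_) <;> rw [interior_Ioo] at hx
  · exact (hasDerivAt_sin_mul_div_sin s (hsin_pos x hx).ne').hasDerivWithinAt
  · exact div_nonneg (sin_ratio_numerator_nonneg hs0 hs1 (Ioo_subset_Icc_self hx)) (sq_nonneg _)

end SinRatio

theorem d1_ratio_monotone (s : ℝ) (hs : s ∈ Set.Ioo (0:ℝ) 1) :
    MonotoneOn (fun t : ℝ => Real.sin (t * s / 2) / Real.sin (t / 2))
      (Set.Ioo 0 (2 * π)) := by
  have hhalf : MapsTo (· / 2) (Ioo 0 (2 * π)) (Ioo 0 π) :=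
    fun t ht => ⟨by linarith [ht.1], by linarith [ht.2]⟩
  have hcomp : (fun t : ℝ => sin (t * s / 2) / sin (t / 2)) =
      (fun x => sin (s * x) / sin x) ∘ (· / 2) := by
    ext t
    simp only [Function.comp_apply, mul_div_assoc, mul_comm]
  rw [hcomp]
  exact (monotoneOn_sin_mul_div_sin hs.1.le hs.2.le).comp
    ((monotone_id.div_const two_pos.le).monotoneOn _) hhalf
end

section
/- For every fixed s in (0,1), the function t ↦ (sin(ts/2) - (ts/2)cos(ts/2))/(sin(t/2) - (t/2)cos(t/2)) is monotone increasing on (0, 2π). -/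
/-!
Write `g x = sin x - x cos x`, so the ratio is `g (s x) / g x` with `x = t / 2 ∈ (0, π)`.
Its logarithmic derivative is `(E (s x) - E x) / x` for the elasticity `E x = x g' x / g x`,
which is nonnegative as soon as `E` is antitone. Here `g' x = x sin x`, and the sign of `E'`
reduces to `x² - 2 sin² x + x sin x cos x ≥ 0`; with `u = 2 x` this is
`u² + u sin u + 4 cos u - 4 > 0` on `(0, 2π)`, which follows by differentiating three times
down to `g` (past `π` the second derivative `2 - 2 cos u - u sin u` is positive since `sin u < 0`).
-/

open Real Set

lemma pos_of_hasDerivAt_pos {f f' : ℝ → ℝ} {b : ℝ} (hf : ContinuousOn f (Icc 0 b))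
    (hf' : ∀ x ∈ Ioo 0 b, HasDerivAt f (f' x) x) (h0 : f 0 = 0)
    (hpos : ∀ x ∈ Ioo 0 b, 0 < f' x) {x : ℝ} (hx : x ∈ Ioc 0 b) : 0 < f x := by
  rw [← interior_Icc] at hf' hpos
  have hmono := strictMonoOn_of_hasDerivWithinAt_pos (convex_Icc 0 b) hf
    (fun y hy => (hf' y hy).hasDerivWithinAt) hpos
  simpa [h0] using hmono (left_mem_Icc.2 (hx.1.le.trans hx.2)) (Ioc_subset_Icc_self hx) hx.1

theorem monotoneOn_div_comp_mul_of_antitoneOn_elasticity {G G' : ℝ → ℝ} {b s : ℝ}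
    (hs0 : 0 < s) (hs1 : s ≤ 1) (hG : ∀ x ∈ Ioo 0 b, HasDerivAt G (G' x) x)
    (hpos : ∀ x ∈ Ioo 0 b, 0 < G x)
    (hE : AntitoneOn (fun x => x * G' x / G x) (Ioo 0 b)) :
    MonotoneOn (fun x => G (s * x) / G x) (Ioo 0 b) := by
  have hsx : ∀ x ∈ Ioo 0 b, s * x ∈ Ioo 0 b := fun x hx =>
    ⟨mul_pos hs0 hx.1, lt_of_le_of_lt (mul_le_of_le_one_left hx.1.le hs1) hx.2⟩
  have hderiv : ∀ x ∈ Ioo 0 b, HasDerivAt (fun x => G (s * x) / G x)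
      ((G' (s * x) * s * G x - G (s * x) * G' x) / G x ^ 2) x := fun x hx =>
    ((hG _ (hsx x hx)).comp x ((hasDerivAt_id' x).const_mul s) |>.congr_deriv (by simp)).div
      (hG x hx) (hpos x hx).ne'
  refine monotoneOn_of_hasDerivWithinAt_nonneg (convex_Ioo 0 b)
    (fun x hx => (hderiv x hx).continuousAt.continuousWithinAt)
    (fun x hx => by rw [interior_Ioo] at hx ⊢; exact (hderiv x hx).hasDerivWithinAt)
    fun x hx => ?_
  rw [interior_Ioo] at hx
  have hGx := hpos x hx
  have hGsx := hpos _ (hsx x hx)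
  have hle : x * G' x / G x ≤ s * x * G' (s * x) / G (s * x) :=
    hE (hsx x hx) hx (mul_le_of_le_one_left hx.1.le hs1)
  rw [div_le_div_iff₀ hGx hGsx] at hle
  refine div_nonneg ?_ (sq_nonneg _)
  nlinarith [hx.1]

lemma hasDerivAt_sin_sub_mul_cos (x : ℝ) :
    HasDerivAt (fun x => sin x - x * cos x) (x * sin x) x :=
  ((hasDerivAt_sin x).sub ((hasDerivAt_id' x).mul (hasDerivAt_cos x))).congr_deriv (by ring)

lemma sin_sub_mul_cos_pos {x : ℝ} (hx : x ∈ Ioc 0 π) : 0 < sin x - x * cos x :=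
  pos_of_hasDerivAt_pos (by fun_prop) (fun y _ => hasDerivAt_sin_sub_mul_cos y) (by simp)
    (fun y hy => mul_pos hy.1 (sin_pos_of_pos_of_lt_pi hy.1 hy.2)) hx

lemma two_sub_two_mul_cos_sub_mul_sin_pos {u : ℝ} (hu : u ∈ Ioo 0 (2 * π)) :
    0 < 2 - 2 * cos u - u * sin u := by
  rcases le_or_gt u π with hle | hlt
  · refine pos_of_hasDerivAt_pos (f := fun u => 2 - 2 * cos u - u * sin u)
      (f' := fun u => sin u - u * cos u) (by fun_prop)
      (fun y _ => ?_) (by simp) (fun y hy => sin_sub_mul_cos_pos ⟨hy.1, hy.2.le⟩)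
      ⟨hu.1, hle⟩
    exact ((((hasDerivAt_cos y).const_mul 2).const_sub 2).sub
      ((hasDerivAt_id' y).mul (hasDerivAt_sin y))).congr_deriv (by ring)
  · have hsin : sin u < 0 := by
      rw [← sin_sub_two_pi]
      exact sin_neg_of_neg_of_neg_pi_lt (by linarith [hu.2]) (by linarith)
    nlinarith [cos_le_one u, hu.1]

lemma two_mul_sub_three_mul_sin_add_mul_cos_pos {u : ℝ} (hu : u ∈ Ioo 0 (2 * π)) :
    0 < 2 * u - 3 * sin u + u * cos u := by
  refine pos_of_hasDerivAt_pos (f := fun u => 2 * u - 3 * sin u + u * cos u)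
    (f' := fun u => 2 - 2 * cos u - u * sin u) (by fun_prop)
    (fun y _ => ?_) (by simp) (fun y hy => two_sub_two_mul_cos_sub_mul_sin_pos hy)
    ⟨hu.1, hu.2.le⟩
  exact ((((hasDerivAt_id' y).const_mul 2).sub ((hasDerivAt_sin y).const_mul 3)).add
    ((hasDerivAt_id' y).mul (hasDerivAt_cos y))).congr_deriv (by ring)

lemma sq_add_mul_sin_add_four_mul_cos_sub_four_pos {u : ℝ} (hu : u ∈ Ioo 0 (2 * π)) :
    0 < u ^ 2 + u * sin u + 4 * cos u - 4 := by
  refine pos_of_hasDerivAt_pos (f := fun u => u ^ 2 + u * sin u + 4 * cos u - 4)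
    (f' := fun u => 2 * u - 3 * sin u + u * cos u) (by fun_prop)
    (fun y _ => ?_) (by simp) (fun y hy => two_mul_sub_three_mul_sin_add_mul_cos_pos hy)
    ⟨hu.1, hu.2.le⟩
  exact ((((hasDerivAt_pow 2 y).add ((hasDerivAt_id' y).mul (hasDerivAt_sin y))).add
    ((hasDerivAt_cos y).const_mul 4)).sub_const 4).congr_deriv (by ring)

lemma sq_sub_two_mul_sin_sq_add_mul_sin_mul_cos_pos {x : ℝ} (hx : x ∈ Ioo 0 π) :
    0 < x ^ 2 - 2 * sin x ^ 2 + x * sin x * cos x := by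
  have h := sq_add_mul_sin_add_four_mul_cos_sub_four_pos (u := 2 * x)
    ⟨by linarith [hx.1], by linarith [hx.2]⟩
  rw [sin_two_mul, cos_two_mul'] at h
  nlinarith [sin_sq_add_cos_sq x]

lemma antitoneOn_elasticity_sin_sub_mul_cos :
    AntitoneOn (fun x => x * (x * sin x) / (sin x - x * cos x)) (Ioo 0 π) := by
  have hderiv : ∀ x ∈ Ioo 0 π, HasDerivAt (fun x => x * (x * sin x) / (sin x - x * cos x))
      (-(x * (x ^ 2 - 2 * sin x ^ 2 + x * sin x * cos x)) / (sin x - x * cos x) ^ 2) x := by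
    intro x hx
    refine (((hasDerivAt_id' x).mul ((hasDerivAt_id' x).mul (hasDerivAt_sin x))).div
      (hasDerivAt_sin_sub_mul_cos x) (sin_sub_mul_cos_pos ⟨hx.1, hx.2.le⟩).ne').congr_deriv ?_
    simp only [Pi.mul_apply]
    congr 1
    linear_combination -x ^ 3 * sin_sq_add_cos_sq x
  refine antitoneOn_of_hasDerivWithinAt_nonpos (convex_Ioo 0 π)
    (fun x hx => (hderiv x hx).continuousAt.continuousWithinAt)
    (fun x hx => by rw [interior_Ioo] at hx ⊢; exact (hderiv x hx).hasDerivWithinAt)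
    fun x hx => ?_
  rw [interior_Ioo] at hx
  exact div_nonpos_of_nonpos_of_nonneg
    (neg_nonpos.2 (mul_pos hx.1 (sq_sub_two_mul_sin_sq_add_mul_sin_mul_cos_pos hx)).le)
    (sq_nonneg _)

theorem d2_ratio_monotone (s : ℝ) (hs : s ∈ Set.Ioo (0:ℝ) 1) :
    MonotoneOn (fun t : ℝ =>
        (Real.sin (t * s / 2) - t * s / 2 * Real.cos (t * s / 2)) /
          (Real.sin (t / 2) - t / 2 * Real.cos (t / 2)))
      (Set.Ioo 0 (2 * π)) := by
  have hratio := monotoneOn_div_comp_mul_of_antitoneOn_elasticity hs.1 hs.2.le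
    (fun x _ => hasDerivAt_sin_sub_mul_cos x) (fun x hx => sin_sub_mul_cos_pos ⟨hx.1, hx.2.le⟩)
    antitoneOn_elasticity_sin_sub_mul_cos
  have hhalf : MapsTo (fun t : ℝ => t / 2) (Ioo 0 (2 * π)) (Ioo 0 π) := fun t ht =>
    ⟨by linarith [ht.1], by linarith [ht.2]⟩
  convert hratio.comp (fun a _ b _ hab => div_le_div_of_nonneg_right hab zero_le_two) hhalf
    using 2 with t
  simp only [Function.comp, show t * s / 2 = s * (t / 2) by ring]
end

section
/- The function g(t) = (t - sin t)/sin²(t/2) is strictly increasing on (0, 2π). -/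
/-!
With `u = t / 2`, the quotient rule and the double-angle formulas give
`g'(t) = 2 (sin u - u cos u) / sin³ u`. The numerator is positive on `(0, π)`: where `cos u ≤ 0`
trivially, and where `cos u > 0` because `u < tan u`.
-/

open Real Set

lemma Real.mul_cos_lt_sin {x : ℝ} (h0 : 0 < x) (hx : x < π) : x * cos x < sin x := by
  rcases le_or_gt (cos x) 0 with hcos | hcos
  · nlinarith [sin_pos_of_pos_of_lt_pi h0 hx]
  · have hx' : x < π / 2 := by
      by_contra! h
      exact hcos.not_ge (cos_nonpos_of_pi_div_two_le_of_le h (by linarith))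
    have htan := lt_tan h0 hx'
    rwa [tan_eq_sin_div_cos, lt_div_iff₀ hcos] at htan

lemma Real.hasDerivAt_sub_sin_div_sin_half_sq {t : ℝ} (ht : sin (t / 2) ≠ 0) :
    HasDerivAt (fun t => (t - sin t) / sin (t / 2) ^ 2)
      (2 * (sin (t / 2) - t / 2 * cos (t / 2)) / sin (t / 2) ^ 3) t := by
  have hnum : HasDerivAt (fun t => t - sin t) (1 - cos t) t :=
    (hasDerivAt_id t).sub (hasDerivAt_sin t)
  have hden := (((hasDerivAt_id' t).div_const 2).sin).pow 2
  refine (hnum.div hden (pow_ne_zero 2 ht)).congr_deriv ?_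
  have hsin : sin t = 2 * sin (t / 2) * cos (t / 2) := by rw [← sin_two_mul]; ring_nf
  have hcos : cos t = 1 - 2 * sin (t / 2) ^ 2 := by rw [← cos_two_mul_eq_one_sub]; ring_nf
  rw [hsin, hcos]
  simp only [Pi.pow_apply, Nat.cast_ofNat]
  field_simp
  linear_combination 2 * sin (t / 2) ^ 2 * sin_sq_add_cos_sq (t / 2)

theorem g_strictMono :
    StrictMonoOn (fun t : ℝ => (t - Real.sin t) / Real.sin (t / 2) ^ 2)
      (Set.Ioo 0 (2 * π)) := by
  have hsin : ∀ t ∈ Ioo 0 (2 * π), 0 < sin (t / 2) := fun t ht =>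
    sin_pos_of_pos_of_lt_pi (by linarith [ht.1]) (by linarith [ht.2])
  have hderiv t (ht : t ∈ Ioo 0 (2 * π)) := hasDerivAt_sub_sin_div_sin_half_sq (hsin t ht).ne'
  refine strictMonoOn_of_deriv_pos (convex_Ioo _ _)
    (fun t ht => (hderiv t ht).continuousAt.continuousWithinAt) fun t ht => ?_
  rw [interior_Ioo] at ht
  rw [(hderiv t ht).deriv]
  have := mul_cos_lt_sin (x := t / 2) (by linarith [ht.1]) (by linarith [ht.2])
  exact div_pos (by linarith) (pow_pos (hsin t ht) 3)
end

section
/- Let m ∈ ℕ, F : ℝ^m × ℝ^m → ℝ^m smooth near (x,y), and sequences x_n → x with x_n ≠ x, y_n → y with F(x_n, y_n) = F(x,y) for all n, and z_n → 0 with z_n/‖x_n - x‖ → v. Then (F(x_n, y_n + z_n) - F(x,y))/‖x_n - x‖ converges to D₂F(x,y)(v). -/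
open Real Filter Asymptotics

theorem claim_diff_discrete (m : ℕ)
    (F : EuclideanSpace ℝ (Fin m) × EuclideanSpace ℝ (Fin m) → EuclideanSpace ℝ (Fin m))
    (x y v : EuclideanSpace ℝ (Fin m))
    (hF : ContDiffAt ℝ (⊤ : ℕ∞) F (x, y))
    (xs ys zs : ℕ → EuclideanSpace ℝ (Fin m))
    (hx : Tendsto xs atTop (nhds x)) (hxne : ∀ n, xs n ≠ x)
    (hy : Tendsto ys atTop (nhds y)) (hFy : ∀ n, F (xs n, ys n) = F (x, y))
    (hz : Tendsto zs atTop (nhds 0))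
    (hzv : Tendsto (fun n => (‖xs n - x‖)⁻¹ • zs n) atTop (nhds v)) :
    Tendsto (fun n => (‖xs n - x‖)⁻¹ • (F (xs n, ys n + zs n) - F (x, y))) atTop
      (nhds (fderiv ℝ (fun q => F (x, q)) y v)) := by
  have hD : HasStrictFDerivAt F (fderiv ℝ F (x, y)) (x, y) := hF.hasStrictFDerivAt (by simp)
  set D := fderiv ℝ F (x, y) with hDdef
  have h2 : HasFDerivAt (fun q => F (x, q)) (D.comp (ContinuousLinearMap.inr ℝ (EuclideanSpace ℝ (Fin m)) (EuclideanSpace ℝ (Fin m)))) y :=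
    hD.hasFDerivAt.comp y (hasFDerivAt_prodMk_right x y)
  have hfd : fderiv ℝ (fun q => F (x, q)) y v = D (0, v) := by
    rw [h2.fderiv]; rfl
  set c : ℕ → ℝ := fun n => (‖xs n - x‖)⁻¹ with hc
  have hyz : Tendsto (fun n => ys n + zs n) atTop (nhds y) := by
    simpa using hy.add hz
  have htends : Tendsto (fun n => (((xs n, ys n + zs n), (xs n, ys n)) : (EuclideanSpace ℝ (Fin m) × EuclideanSpace ℝ (Fin m)) × (EuclideanSpace ℝ (Fin m) × EuclideanSpace ℝ (Fin m))))
      atTop (nhds ((x, y), (x, y))) :=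
    (hx.prodMk_nhds hyz).prodMk_nhds (hx.prodMk_nhds hy)
  have o1 : (fun n => F (xs n, ys n + zs n) - F (xs n, ys n) - D ((0 : EuclideanSpace ℝ (Fin m)), zs n))
      =o[atTop] fun n => (((0 : EuclideanSpace ℝ (Fin m)), zs n) : EuclideanSpace ℝ (Fin m) × EuclideanSpace ℝ (Fin m)) := by
    have h := hD.isLittleO.comp_tendsto htends
    simp only [Function.comp_def, Prod.mk_sub_mk, sub_self, add_sub_cancel_left] at h
    exact h
  have o2 : (fun n => c n • (F (xs n, ys n + zs n) - F (xs n, ys n) - D ((0 : EuclideanSpace ℝ (Fin m)), zs n)))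
      =o[atTop] fun n => c n • (((0 : EuclideanSpace ℝ (Fin m)), zs n) : EuclideanSpace ℝ (Fin m) × EuclideanSpace ℝ (Fin m)) :=
    (isBigO_refl c atTop).smul_isLittleO o1
  have hczv : Tendsto (fun n => c n • zs n) atTop (nhds v) := hzv
  have hbig : (fun n => c n • (((0 : EuclideanSpace ℝ (Fin m)), zs n) : EuclideanSpace ℝ (Fin m) × EuclideanSpace ℝ (Fin m))) =O[atTop] (fun _ => (1 : ℝ)) := by
    have h : Tendsto (fun n => c n • (((0 : EuclideanSpace ℝ (Fin m)), zs n) : EuclideanSpace ℝ (Fin m) × EuclideanSpace ℝ (Fin m))) atTop (nhds ((0 : EuclideanSpace ℝ (Fin m)), v)) := by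
      have h' : Tendsto (fun n => (((0 : EuclideanSpace ℝ (Fin m)), c n • zs n) : EuclideanSpace ℝ (Fin m) × EuclideanSpace ℝ (Fin m))) atTop (nhds ((0 : EuclideanSpace ℝ (Fin m)), v)) :=
        tendsto_const_nhds.prodMk_nhds hczv
      simpa [Prod.smul_mk] using h'
    exact h.isBigO_one ℝ
  have o3 : Tendsto (fun n => c n • (F (xs n, ys n + zs n) - F (xs n, ys n) - D ((0 : EuclideanSpace ℝ (Fin m)), zs n)))
      atTop (nhds 0) := isLittleO_one_iff ℝ |>.mp (o2.trans_isBigO hbig)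
  have hlin : Tendsto (fun n => D ((0 : EuclideanSpace ℝ (Fin m)), c n • zs n)) atTop (nhds (D (0, v))) :=
    (D.continuous.tendsto _).comp (tendsto_const_nhds.prodMk_nhds hczv)
  have key : Tendsto (fun n => c n • (F (xs n, ys n + zs n) - F (xs n, ys n))) atTop
      (nhds (D (0, v))) := by
    have h := o3.add hlin
    rw [zero_add] at h
    refine h.congr fun n => ?_
    have hs : D ((0 : EuclideanSpace ℝ (Fin m)), c n • zs n) = c n • D ((0 : EuclideanSpace ℝ (Fin m)), zs n) := by
      rw [← D.map_smul, Prod.smul_mk, smul_zero]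
    rw [hs, smul_sub, smul_sub, sub_add_cancel]
  rw [hfd]
  refine key.congr fun n => ?_
  rw [hFy n]
end

section
/- Let (X,d) be a geodesic metric space, x, y ∈ X, s ∈ [0,1], and let γ(s) be an s-intermediate point between x and y, i.e. d(x,γ(s)) = s·d(x,y) and d(γ(s),y) = (1-s)·d(x,y). Then for every z ∈ X, d(γ(s),z)²/2 - s·d(y,z)²/2 + s(1-s)·d(x,y)²/2 ≥ 0, with equality when z = x. -/
open Real

theorem metric_intermediate_point_inequality {X : Type*} [MetricSpace X]
    (x y γs : X) (s : ℝ) (hs : s ∈ Set.Icc (0:ℝ) 1)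
    (h₁ : dist x γs = s * dist x y) (h₂ : dist γs y = (1 - s) * dist x y) :
    (∀ z : X,
      0 ≤ dist γs z ^ 2 / 2 - s * dist y z ^ 2 / 2 + s * (1 - s) * dist x y ^ 2 / 2) ∧
    dist γs x ^ 2 / 2 - s * dist y x ^ 2 / 2 + s * (1 - s) * dist x y ^ 2 / 2 = 0 := by
  obtain ⟨hs0, hs1⟩ := hs
  constructor
  · intro z
    have htri : dist y z ≤ dist y γs + dist γs z := dist_triangle y γs z
    have hyγ : dist y γs = (1 - s) * dist x y := by rw [dist_comm]; exact h₂
    have h1 : dist γs z ≥ dist y z - (1 - s) * dist x y := by linarith [htri, hyγ.le, hyγ.ge]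
    have h2 : (0:ℝ) ≤ dist γs z := dist_nonneg
    have h3 : (0:ℝ) ≤ dist y z := dist_nonneg
    have h4 : (0:ℝ) ≤ dist x y := dist_nonneg
    rcases le_or_gt ((1 - s) * dist x y) (dist y z) with hc | hc
    · have key : dist γs z ^ 2 ≥ (dist y z - (1 - s) * dist x y) ^ 2 := by
        apply sq_le_sq' <;> nlinarith
      nlinarith [mul_nonneg (sub_nonneg.2 hs1) (sq_nonneg (dist y z - dist x y))]
    · nlinarith [mul_nonneg (mul_nonneg hs0 (sub_nonneg.2 hs1)) (sq_nonneg (dist x y)),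
        mul_nonneg hs0 (mul_nonneg (sub_nonneg.2 hs1) h4), sq_nonneg (dist γs z),
        mul_le_mul_of_nonneg_left (mul_le_mul hc.le hc.le h3 (mul_nonneg (sub_nonneg.2 hs1) h4)) hs0,
        mul_nonneg (mul_nonneg hs0 hs0) (sq_nonneg (dist x y))]
  · have hγx : dist γs x = s * dist x y := by rw [dist_comm]; exact h₁
    have hyx : dist y x = dist x y := dist_comm y x
    rw [hγx, hyx]; ring
end

section
/- Fix n ≥ 1, s ∈ (0,1), p ≥ -1/(n+3), and a, b ≥ 0 with ab ≠ 0. Then M_s^p(a,b) · M_s^{1/2}(1/(1-s)², 1/s²) ≥ M_s^{p/(2p+1)}(a/(1-s)², b/s²). -/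
open Real

/-- The `p`-mean `M_s^p(a,b)`. -/
noncomputable def pMean (s : ℝ) (p : EReal) (a b : ℝ) : ℝ :=
  if p = ⊥ then min a b
  else if p = ⊤ then (if a * b = 0 then 0 else max a b)
  else if p = 0 then a ^ (1 - s) * b ^ s
  else if a * b = 0 then 0
  else ((1 - s) * a ^ p.toReal + s * b ^ p.toReal) ^ p.toReal⁻¹

/-!
The inequality is the Hölder inequality for power means, `M^r(ac, bd) ≤ M^p(a, b) · M^q(c, d)`
whenever `q > 0`, `p + q > 0` and `1/r = 1/p + 1/q`, taken with `q = 1/2`, `c = 1/(1-s)²` and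
`d = 1/s²`. For `p > 0` this is the weighted Hölder inequality, for `p = 0` it is AM–GM, and for
`p < 0` the duality `M^p(x) = 1 / M^{-p}(1/x)` reduces it to the positive exponents `-r`, `q`, `-p`.
-/

open Set

theorem Real.weight_Lr_rpow_le_Lp_mul_Lq_of_nonneg {ι : Type*} (s : Finset ι) {w f g : ι → ℝ}
    {p q r : ℝ} (hpqr : p.HolderTriple q r) (hw : ∀ i ∈ s, 0 ≤ w i) (hf : ∀ i ∈ s, 0 ≤ f i)
    (hg : ∀ i ∈ s, 0 ≤ g i) :
    ∑ i ∈ s, w i * (f i * g i) ^ r ≤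
      (∑ i ∈ s, w i * f i ^ p) ^ (r / p) * (∑ i ∈ s, w i * g i ^ q) ^ (r / q) := by
  have holder := Lr_rpow_le_Lp_mul_Lq_of_nonneg s (f := fun i ↦ w i ^ p⁻¹ * f i)
    (g := fun i ↦ w i ^ q⁻¹ * g i) hpqr
    (fun i hi ↦ mul_nonneg (rpow_nonneg (hw i hi) _) (hf i hi))
    (fun i hi ↦ mul_nonneg (rpow_nonneg (hw i hi) _) (hg i hi))
  have weight_pow {x e : ℝ} (hx : 0 ≤ x) (he : e ≠ 0) : (x ^ e⁻¹) ^ e = x := by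
    rw [← rpow_mul hx, inv_mul_cancel₀ he, rpow_one]
  convert holder using 3 with i hi
  · rw [mul_mul_mul_comm,
      ← rpow_add' (hw i hi) (by rw [hpqr.inv_add_inv_eq_inv]; exact hpqr.inv_ne_zero'),
      hpqr.inv_add_inv_eq_inv, mul_rpow (rpow_nonneg (hw i hi) _) (mul_nonneg (hf i hi) (hg i hi)),
      weight_pow (hw i hi) hpqr.ne_zero']
  all_goals
    apply Finset.sum_congr rfl fun i hi ↦ ?_
  · rw [mul_rpow (rpow_nonneg (hw i hi) _) (hf i hi), weight_pow (hw i hi) hpqr.ne_zero]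
  · rw [mul_rpow (rpow_nonneg (hw i hi) _) (hg i hi), weight_pow (hw i hi) hpqr.symm.ne_zero]

section pMean

variable {s : ℝ} {a b c d : ℝ}

theorem pMean_coe_of_ne_zero {p : ℝ} (hp : p ≠ 0) (hab : a * b ≠ 0) :
    pMean s p a b = ((1 - s) * a ^ p + s * b ^ p) ^ p⁻¹ := by
  simp [pMean, hp, hab]

theorem pMean_coe_zero : pMean s ((0 : ℝ) : EReal) a b = a ^ (1 - s) * b ^ s := by
  simp [pMean]

theorem pMean_pos (hs : s ∈ Ioo 0 1) (p : ℝ) (ha : 0 < a) (hb : 0 < b) : 0 < pMean s p a b := by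
  have hs0 := hs.1; have hs1 : 0 < 1 - s := sub_pos.2 hs.2
  rcases eq_or_ne p 0 with rfl | hp
  · rw [pMean_coe_zero]; positivity
  · rw [pMean_coe_of_ne_zero hp (by positivity)]; positivity

theorem pMean_eq_inv_pMean_neg_inv (hs : s ∈ Ioo 0 1) {p : ℝ} (hp : p ≠ 0) (ha : 0 < a)
    (hb : 0 < b) : pMean s p a b = (pMean s ↑(-p) a⁻¹ b⁻¹)⁻¹ := by
  have hs0 := hs.1; have hs1 : 0 < 1 - s := sub_pos.2 hs.2
  rw [pMean_coe_of_ne_zero hp (by positivity),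
    pMean_coe_of_ne_zero (neg_ne_zero.2 hp) (by positivity), inv_rpow ha.le, inv_rpow hb.le,
    rpow_neg ha.le, rpow_neg hb.le, inv_inv, inv_inv, inv_neg, rpow_neg (by positivity), inv_inv]

theorem pMean_mul_le_of_holderTriple (hs : s ∈ Ioo 0 1) {p q r : ℝ} (hpqr : p.HolderTriple q r)
    (ha : 0 < a) (hb : 0 < b) (hc : 0 < c) (hd : 0 < d) :
    pMean s r (a * c) (b * d) ≤ pMean s p a b * pMean s q c d := by
  have hs0 := hs.1; have hs1 : 0 < 1 - s := sub_pos.2 hs.2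
  obtain ⟨hp, hq, hr⟩ := hpqr.all_pos
  rw [pMean_coe_of_ne_zero hr.ne' (by positivity), pMean_coe_of_ne_zero hp.ne' (by positivity),
    pMean_coe_of_ne_zero hq.ne' (by positivity)]
  have holder := Real.weight_Lr_rpow_le_Lp_mul_Lq_of_nonneg Finset.univ (w := ![1 - s, s])
    (f := ![a, b]) (g := ![c, d]) hpqr (by simp [Fin.forall_fin_two, hs0.le, hs1.le])
    (by simp [Fin.forall_fin_two, ha.le, hb.le]) (by simp [Fin.forall_fin_two, hc.le, hd.le])
  simp only [Fin.sum_univ_two, Matrix.cons_val_zero, Matrix.cons_val_one] at holder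
  calc ((1 - s) * (a * c) ^ r + s * (b * d) ^ r) ^ r⁻¹
      ≤ (((1 - s) * a ^ p + s * b ^ p) ^ (r / p) * ((1 - s) * c ^ q + s * d ^ q) ^ (r / q)) ^ r⁻¹ :=
        rpow_le_rpow (by positivity) holder (by positivity)
    _ = ((1 - s) * a ^ p + s * b ^ p) ^ p⁻¹ * ((1 - s) * c ^ q + s * d ^ q) ^ q⁻¹ := by
        rw [mul_rpow (by positivity) (by positivity), ← rpow_mul (by positivity),
          ← rpow_mul (by positivity)]
        congr 2 <;> field_simp

theorem pMean_coe_zero_le (hs : s ∈ Ioo 0 1) {q : ℝ} (hq : 0 < q) (ha : 0 < a) (hb : 0 < b) :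
    pMean s ((0 : ℝ) : EReal) a b ≤ pMean s q a b := by
  have hs0 := hs.1; have hs1 : 0 < 1 - s := sub_pos.2 hs.2
  rw [pMean_coe_zero, pMean_coe_of_ne_zero hq.ne' (by positivity)]
  have amgm : (a ^ (1 - s) * b ^ s) ^ q ≤ (1 - s) * a ^ q + s * b ^ q := by
    rw [mul_rpow (by positivity) (by positivity), ← rpow_mul ha.le, ← rpow_mul hb.le,
      mul_comm (1 - s), mul_comm s, rpow_mul ha.le, rpow_mul hb.le]
    exact geom_mean_le_arith_mean2_weighted hs1.le hs0.le (by positivity) (by positivity)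
      (by ring)
  calc a ^ (1 - s) * b ^ s = ((a ^ (1 - s) * b ^ s) ^ q) ^ q⁻¹ :=
        (rpow_rpow_inv (by positivity) hq.ne').symm
    _ ≤ ((1 - s) * a ^ q + s * b ^ q) ^ q⁻¹ := rpow_le_rpow (by positivity) amgm (by positivity)

theorem pMean_mul_le (hs : s ∈ Ioo 0 1) {p q : ℝ} (hq : 0 < q) (hpq : 0 < p + q) (ha : 0 < a)
    (hb : 0 < b) (hc : 0 < c) (hd : 0 < d) :
    pMean s ↑(p * q / (p + q)) (a * c) (b * d) ≤ pMean s p a b * pMean s q c d := by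
  rcases lt_trichotomy p 0 with hp | rfl | hp
  · set r := p * q / (p + q)
    have hr : r < 0 := div_neg_of_neg_of_pos (mul_neg_of_neg_of_pos hp hq) hpq
    have hreflected : (-r).HolderTriple q (-p) :=
      ⟨by simp only [r]; field_simp [hp.ne]; ring, by linarith, hq⟩
    have holder := pMean_mul_le_of_holderTriple hs hreflected (a := (a * c)⁻¹) (b := (b * d)⁻¹)
      (by positivity) (by positivity) hc hd
    rw [show (a * c)⁻¹ * c = a⁻¹ by field_simp, show (b * d)⁻¹ * d = b⁻¹ by field_simp] at holder
    rw [pMean_eq_inv_pMean_neg_inv hs hr.ne (by positivity) (by positivity),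
      pMean_eq_inv_pMean_neg_inv hs hp.ne ha hb, inv_mul_eq_div,
      le_div_iff₀ (pMean_pos hs _ (by positivity) (by positivity)),
      inv_mul_le_iff₀ (pMean_pos hs _ (by positivity) (by positivity))]
    exact holder
  · calc pMean s ↑(0 * q / (0 + q)) (a * c) (b * d)
        = pMean s ((0 : ℝ) : EReal) a b * pMean s ((0 : ℝ) : EReal) c d := by
          rw [zero_mul, zero_div, pMean_coe_zero, pMean_coe_zero, pMean_coe_zero,
            mul_rpow ha.le hc.le, mul_rpow hb.le hd.le]
          ring
      _ ≤ pMean s ((0 : ℝ) : EReal) a b * pMean s q c d :=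
          mul_le_mul_of_nonneg_left (pMean_coe_zero_le hs hq hc hd) (pMean_pos hs _ ha hb).le
  · exact pMean_mul_le_of_holderTriple hs ⟨by field_simp; ring, hp, hq⟩ ha hb hc hd

end pMean

theorem pMean_bbl_key_general (n : ℕ) (s : ℝ) (hs : s ∈ Set.Ioo (0:ℝ) 1)
    (p : ℝ) (hp : -(1 / ((n : ℝ) + 3)) ≤ p) (a b : ℝ) (ha : 0 ≤ a) (hb : 0 ≤ b)
    (hab : a * b ≠ 0) :
    pMean s (p : EReal) a b * pMean s (((1 : ℝ) / 2 : ℝ) : EReal) (1 / (1 - s) ^ 2) (1 / s ^ 2) ≥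
      pMean s ((p / (2 * p + 1) : ℝ) : EReal) (a / (1 - s) ^ 2) (b / s ^ 2) := by
  have hp' : 0 < p + 1 / 2 := by
    have : 1 / ((n : ℝ) + 3) ≤ 1 / 3 := by gcongr; linarith [n.cast_nonneg (α := ℝ)]
    linarith
  have hs0 := hs.1; have hs1 : 0 < 1 - s := sub_pos.2 hs.2
  have ha' : 0 < a := ha.lt_of_ne (by rintro rfl; simp at hab)
  have hb' : 0 < b := hb.lt_of_ne (by rintro rfl; simp at hab)
  convert pMean_mul_le hs (by norm_num) hp' ha' hb' (c := 1 / (1 - s) ^ 2) (d := 1 / s ^ 2)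
    (by positivity) (by positivity) using 2
  · congr 1; field_simp
  all_goals ring

theorem pMean_bbl_key (n : ℕ) (hn : 1 ≤ n) (s : ℝ) (hs : s ∈ Set.Ioo (0:ℝ) 1)
    (p : ℝ) (hp : -(1 / ((n : ℝ) + 3)) ≤ p) (a b : ℝ) (ha : 0 ≤ a) (hb : 0 ≤ b)
    (hab : a * b ≠ 0) :
    pMean s (p : EReal) a b * pMean s (((1 : ℝ) / 2 : ℝ) : EReal) (1 / (1 - s) ^ 2) (1 / s ^ 2) ≥
      pMean s ((p / (2 * p + 1) : ℝ) : EReal) (a / (1 - s) ^ 2) (b / s ^ 2) :=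
  pMean_bbl_key_general n s hs p hp a b ha hb hab
end

section
/- For every k ≥ 1, d ≥ 1, real parameters 0 < α₁ ≤ ... ≤ α_d, every s ∈ (0,1), and every p = (p_x, p_z) with |p_z| < 2π/α_d, p_z ≠ 0 and not all p_x^i zero (i = 1,...,d), the Carnot distortion coefficient τ_s^{k,α}(p) = s·(Σᵢ ‖p_x^i‖² ∏_{j≠i} d₁²(α_j p_z, s) d₁(α_i p_z, s) d₂(α_i p_z, s) / Σᵢ ‖p_x^i‖² ∏_{j≠i} d₁²(α_j p_z, 1) d₁(α_i p_z, 1) d₂(α_i p_z, 1))^{1/(k+1)} satisfies τ_s^{k,α}(p) ≥ s^{(k+3)/(k+1)}. -/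
/-!
Write `g x = sin x - x cos x`, so that `d₁(t,s) = sin (ts/2) / s` and `d₂(t,s) = g (ts/2) / s`.
Both are odd in `t`, so the products `d₁²` and `d₁ d₂` entering `τ` only depend on `|t|`, and for
`x = |t|/2 ∈ [0, π]` concavity of `sin` gives `s sin x ≤ sin (s x)`, while `g' x = x sin x` gives
`s³ g x ≤ g (s x)`. Hence every summand of the numerator of `τ` dominates `s²` times the
corresponding summand of the denominator, so `τ ≥ s · (s²)^{1/(k+1)} = s^{(k+3)/(k+1)}`.
-/

open Real Finset Set

namespace Real

lemma mul_sin_le_sin_mul {s x : ℝ} (hs₀ : 0 ≤ s) (hs₁ : s ≤ 1) (hx₀ : 0 ≤ x) (hxπ : x ≤ π) :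
    s * sin x ≤ sin (s * x) := by
  simpa using strictConcaveOn_sin_Icc.concaveOn.2 (left_mem_Icc.2 pi_pos.le) ⟨hx₀, hxπ⟩
    (sub_nonneg.2 hs₁) hs₀ (sub_add_cancel 1 s)

lemma hasDerivAt_sin_sub_mul_cos (x : ℝ) :
    HasDerivAt (fun x => sin x - x * cos x) (x * sin x) x := by
  have h := (hasDerivAt_sin x).sub ((hasDerivAt_id x).mul (hasDerivAt_cos x))
  exact h.congr_deriv (by simp only [id_eq]; ring)

lemma strictMonoOn_sin_sub_mul_cos : StrictMonoOn (fun x => sin x - x * cos x) (Icc 0 π) := by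
  refine strictMonoOn_of_hasDerivWithinAt_pos (convex_Icc 0 π) (by fun_prop)
    (fun x _ => (hasDerivAt_sin_sub_mul_cos x).hasDerivWithinAt) fun x hx => ?_
  rw [interior_Icc] at hx
  exact mul_pos hx.1 (sin_pos_of_pos_of_lt_pi hx.1 hx.2)

lemma sin_sub_mul_cos_pos {x : ℝ} (hx₀ : 0 < x) (hxπ : x ≤ π) : 0 < sin x - x * cos x := by
  simpa using strictMonoOn_sin_sub_mul_cos (left_mem_Icc.2 pi_pos.le) ⟨hx₀.le, hxπ⟩ hx₀

lemma sin_sub_mul_cos_nonneg {x : ℝ} (hx₀ : 0 ≤ x) (hxπ : x ≤ π) : 0 ≤ sin x - x * cos x := by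
  simpa using strictMonoOn_sin_sub_mul_cos.monotoneOn (left_mem_Icc.2 pi_pos.le) ⟨hx₀, hxπ⟩ hx₀

/-- The difference has derivative `s² x (sin (s x) - s sin x) ≥ 0` and vanishes at `x = 0`. -/
lemma pow_three_mul_sin_sub_mul_cos_le {s x : ℝ} (hs₀ : 0 ≤ s) (hs₁ : s ≤ 1) (hx₀ : 0 ≤ x)
    (hxπ : x ≤ π) : s ^ 3 * (sin x - x * cos x) ≤ sin (s * x) - s * x * cos (s * x) := by
  set F : ℝ → ℝ := fun v => sin (s * v) - s * v * cos (s * v) - s ^ 3 * (sin v - v * cos v)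
  have hF : ∀ v, HasDerivAt F (s ^ 2 * v * (sin (s * v) - s * sin v)) v := fun v => by
    have h := ((hasDerivAt_sin_sub_mul_cos (s * v)).comp v ((hasDerivAt_id v).const_mul s)).sub
      ((hasDerivAt_sin_sub_mul_cos v).const_mul (s ^ 3))
    exact h.congr_deriv (by ring)
  have hmono : MonotoneOn F (Icc 0 π) := by
    refine monotoneOn_of_hasDerivWithinAt_nonneg (convex_Icc 0 π) (by fun_prop)
      (fun v _ => (hF v).hasDerivWithinAt) fun v hv => ?_
    rw [interior_Icc] at hv
    exact mul_nonneg (mul_nonneg (sq_nonneg s) hv.1.le)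
      (sub_nonneg.2 (mul_sin_le_sin_mul hs₀ hs₁ hv.1.le hv.2.le))
  have h := hmono (left_mem_Icc.2 pi_pos.le) ⟨hx₀, hxπ⟩ hx₀
  simp only [F, mul_zero, sin_zero, zero_mul, sub_zero] at h
  linarith

lemma rpow_add_two_div_le_mul_rpow {s x r : ℝ} (hs : 0 < s) (hr : 0 < r) (hx : s ^ 2 ≤ x) :
    s ^ ((r + 2) / r) ≤ s * x ^ (1 / r) := by
  rw [show (r + 2) / r = 1 + 2 * (1 / r) by field_simp, rpow_add hs, rpow_one,
    rpow_mul hs.le, rpow_two]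
  exact mul_le_mul_of_nonneg_left (rpow_le_rpow (by positivity) hx (one_div_pos.2 hr).le) hs.le

end Real

namespace CarnotDistortion

noncomputable def d₁ (t s : ℝ) : ℝ := sin (t * s / 2) / s

noncomputable def d₂ (t s : ℝ) : ℝ := (sin (t * s / 2) - t * s / 2 * cos (t * s / 2)) / s

lemma d₁_neg (t s : ℝ) : d₁ (-t) s = -d₁ t s := by
  rw [d₁, d₁, neg_mul, neg_div, sin_neg, neg_div]

lemma d₂_neg (t s : ℝ) : d₂ (-t) s = -d₂ t s := by
  rw [d₂, d₂, neg_mul, neg_div, sin_neg, cos_neg]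
  ring

lemma d₁_abs_sq (t s : ℝ) : d₁ |t| s ^ 2 = d₁ t s ^ 2 := by
  rcases abs_choice t with h | h <;> simp [h, d₁_neg]

lemma d₁_abs_mul_d₂_abs (t s : ℝ) : d₁ |t| s * d₂ |t| s = d₁ t s * d₂ t s := by
  rcases abs_choice t with h | h <;> simp [h, d₁_neg, d₂_neg]

section Nonneg

variable {t s : ℝ} (ht₀ : 0 ≤ t) (ht : t ≤ 2 * π)
include ht₀ ht

lemma d₁_one_nonneg : 0 ≤ d₁ t 1 := by
  rw [d₁, mul_one, div_one]
  exact sin_nonneg_of_nonneg_of_le_pi (by linarith) (by linarith)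

lemma d₂_one_nonneg : 0 ≤ d₂ t 1 := by
  rw [d₂, mul_one, div_one]
  exact sin_sub_mul_cos_nonneg (by linarith) (by linarith)

lemma d₁_one_le_d₁ (hs₀ : 0 < s) (hs₁ : s ≤ 1) : d₁ t 1 ≤ d₁ t s := by
  rw [d₁, d₁, mul_one, div_one, le_div_iff₀ hs₀, mul_comm, show t * s / 2 = s * (t / 2) by ring]
  exact mul_sin_le_sin_mul hs₀.le hs₁ (by linarith) (by linarith)

lemma sq_mul_d₂_one_le_d₂ (hs₀ : 0 < s) (hs₁ : s ≤ 1) : s ^ 2 * d₂ t 1 ≤ d₂ t s := by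
  rw [d₂, d₂, mul_one, div_one, le_div_iff₀ hs₀, show t * s / 2 = s * (t / 2) by ring]
  calc s ^ 2 * (sin (t / 2) - t / 2 * cos (t / 2)) * s
      = s ^ 3 * (sin (t / 2) - t / 2 * cos (t / 2)) := by ring
    _ ≤ _ := pow_three_mul_sin_sub_mul_cos_le hs₀.le hs₁ (by linarith) (by linarith)

end Nonneg

lemma d₁_one_mul_d₂_one_nonneg {t : ℝ} (ht : |t| ≤ 2 * π) : 0 ≤ d₁ t 1 * d₂ t 1 := by
  rw [← d₁_abs_mul_d₂_abs]
  exact mul_nonneg (d₁_one_nonneg (abs_nonneg t) ht) (d₂_one_nonneg (abs_nonneg t) ht)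

section Abs

variable {t s : ℝ} (ht : |t| ≤ 2 * π) (hs₀ : 0 < s) (hs₁ : s ≤ 1)
include ht hs₀ hs₁

lemma d₁_one_sq_le_d₁_sq : d₁ t 1 ^ 2 ≤ d₁ t s ^ 2 := by
  rw [← d₁_abs_sq t 1, ← d₁_abs_sq t s]
  exact pow_le_pow_left₀ (d₁_one_nonneg (abs_nonneg t) ht)
    (d₁_one_le_d₁ (abs_nonneg t) ht hs₀ hs₁) 2

lemma sq_mul_d₁_one_mul_d₂_one_le : s ^ 2 * (d₁ t 1 * d₂ t 1) ≤ d₁ t s * d₂ t s := by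
  rw [← d₁_abs_mul_d₂_abs t 1, ← d₁_abs_mul_d₂_abs t s, mul_left_comm]
  have h₁ := d₁_one_le_d₁ (abs_nonneg t) ht hs₀ hs₁
  exact mul_le_mul h₁ (sq_mul_d₂_one_le_d₂ (abs_nonneg t) ht hs₀ hs₁)
    (mul_nonneg (sq_nonneg s) (d₂_one_nonneg (abs_nonneg t) ht))
    ((d₁_one_nonneg (abs_nonneg t) ht).trans h₁)

end Abs

lemma d₁_one_mul_d₂_one_pos {t : ℝ} (ht₀ : t ≠ 0) (ht : |t| < 2 * π) : 0 < d₁ t 1 * d₂ t 1 := by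
  have hx : 0 < |t| / 2 := by positivity
  rw [← d₁_abs_mul_d₂_abs, d₁, d₂, mul_one, div_one, div_one]
  exact mul_pos (sin_pos_of_pos_of_lt_pi hx (by linarith)) (sin_sub_mul_cos_pos hx (by linarith))

variable {ι : Type*} [Fintype ι] [DecidableEq ι]

/-- The sum `Σᵢ wᵢ ∏_{j≠i} d₁²(tⱼ, s) d₁(tᵢ, s) d₂(tᵢ, s)`, with `wᵢ = ‖p_x^i‖²` and
`tᵢ = αᵢ p_z` in the paper's `τ_s^{k,α}(p)`. -/
noncomputable def distortionSum (w t : ι → ℝ) (s : ℝ) : ℝ :=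
  ∑ i, w i * (∏ j ∈ univ.erase i, d₁ (t j) s ^ 2) * d₁ (t i) s * d₂ (t i) s

lemma sq_mul_distortionSum_one_le {w t : ι → ℝ} {s : ℝ} (hw : ∀ i, 0 ≤ w i)
    (ht : ∀ i, |t i| < 2 * π) (hs₀ : 0 < s) (hs₁ : s ≤ 1) :
    s ^ 2 * distortionSum w t 1 ≤ distortionSum w t s := by
  rw [distortionSum, distortionSum, mul_sum]
  refine sum_le_sum fun i _ => ?_
  have hprod : ∏ j ∈ univ.erase i, d₁ (t j) 1 ^ 2 ≤ ∏ j ∈ univ.erase i, d₁ (t j) s ^ 2 :=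
    prod_le_prod (fun j _ => sq_nonneg _)
      fun j _ => d₁_one_sq_le_d₁_sq (ht j).le hs₀ hs₁
  calc s ^ 2 * (w i * (∏ j ∈ univ.erase i, d₁ (t j) 1 ^ 2) * d₁ (t i) 1 * d₂ (t i) 1)
      = w i * (∏ j ∈ univ.erase i, d₁ (t j) 1 ^ 2) * (s ^ 2 * (d₁ (t i) 1 * d₂ (t i) 1)) := by
        ring
    _ ≤ w i * (∏ j ∈ univ.erase i, d₁ (t j) s ^ 2) * (d₁ (t i) s * d₂ (t i) s) := by
        refine mul_le_mul (mul_le_mul_of_nonneg_left hprod (hw i))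
          (sq_mul_d₁_one_mul_d₂_one_le (ht i).le hs₀ hs₁) ?_
          (mul_nonneg (hw i) (prod_nonneg fun j _ => sq_nonneg _))
        exact mul_nonneg (sq_nonneg s) (d₁_one_mul_d₂_one_nonneg (ht i).le)
    _ = w i * (∏ j ∈ univ.erase i, d₁ (t j) s ^ 2) * d₁ (t i) s * d₂ (t i) s := by ring

lemma distortionSum_one_pos {w t : ι → ℝ} (hw : ∀ i, 0 ≤ w i) (hw' : ∃ i, 0 < w i)
    (ht₀ : ∀ i, t i ≠ 0) (ht : ∀ i, |t i| < 2 * π) : 0 < distortionSum w t 1 := by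
  have hterm : ∀ i, 0 < d₁ (t i) 1 * d₂ (t i) 1 := fun i => d₁_one_mul_d₂_one_pos (ht₀ i) (ht i)
  have hprod : ∀ i, 0 < ∏ j ∈ univ.erase i, d₁ (t j) 1 ^ 2 := fun i =>
    prod_pos fun j _ => sq_pos_of_ne_zero (left_ne_zero_of_mul (hterm j).ne')
  obtain ⟨i₀, hi₀⟩ := hw'
  refine sum_pos' (fun i _ => ?_) ⟨i₀, mem_univ i₀, ?_⟩ <;> rw [mul_assoc]
  · exact mul_nonneg (mul_nonneg (hw i) (hprod i).le) (hterm i).le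
  · exact mul_pos (mul_pos hi₀ (hprod i₀)) (hterm i₀)

end CarnotDistortion

open CarnotDistortion in
theorem tau_lower_bound (k d : ℕ) (hd : 1 ≤ d)
    (α : Fin d → ℝ) (hαpos : ∀ i, 0 < α i) (hαmono : Monotone α)
    (s : ℝ) (hs : s ∈ Set.Ioo (0:ℝ) 1)
    (px : Fin d → EuclideanSpace ℝ (Fin 2)) (pz : ℝ) (hpz : pz ≠ 0)
    (hpzb : |pz| < 2 * π / α ⟨d - 1, by omega⟩)
    (hpx : ∃ i, px i ≠ 0) :
    s * ((∑ i, ‖px i‖ ^ 2 *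
            (∏ j ∈ Finset.univ.erase i, (Real.sin (α j * pz * s / 2) / s) ^ 2) *
            (Real.sin (α i * pz * s / 2) / s) *
            ((Real.sin (α i * pz * s / 2) - α i * pz * s / 2 * Real.cos (α i * pz * s / 2)) / s)) /
          (∑ i, ‖px i‖ ^ 2 *
            (∏ j ∈ Finset.univ.erase i, (Real.sin (α j * pz * 1 / 2) / 1) ^ 2) *
            (Real.sin (α i * pz * 1 / 2) / 1) *
            ((Real.sin (α i * pz * 1 / 2) - α i * pz * 1 / 2 * Real.cos (α i * pz * 1 / 2)) / 1))) ^
        (1 / ((k : ℝ) + 1)) ≥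
      s ^ (((k : ℝ) + 3) / ((k : ℝ) + 1)) := by
  obtain ⟨hs₀, hs₁⟩ := hs
  set w : Fin d → ℝ := fun i => ‖px i‖ ^ 2
  set t : Fin d → ℝ := fun i => α i * pz
  have ht : ∀ i, |t i| < 2 * π := fun i => by
    have hlast : α i ≤ α ⟨d - 1, by omega⟩ :=
      hαmono (Fin.le_def.2 (show (i : ℕ) ≤ d - 1 by omega))
    rw [lt_div_iff₀ (hαpos _)] at hpzb
    calc |t i| = α i * |pz| := by rw [abs_mul, abs_of_pos (hαpos i)]
      _ ≤ α ⟨d - 1, by omega⟩ * |pz| := mul_le_mul_of_nonneg_right hlast (abs_nonneg pz)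
      _ < 2 * π := by linarith
  have hD : 0 < distortionSum w t 1 :=
    distortionSum_one_pos (fun i => sq_nonneg _)
      (hpx.imp fun i hi => pow_pos (norm_pos_iff.2 hi) 2)
      (fun i => mul_ne_zero (hαpos i).ne' hpz) ht
  have hratio : s ^ 2 ≤ distortionSum w t s / distortionSum w t 1 :=
    (le_div_iff₀ hD).2 (sq_mul_distortionSum_one_le (fun i => sq_nonneg _) ht hs₀ hs₁.le)
  have h := rpow_add_two_div_le_mul_rpow hs₀ (by positivity : (0 : ℝ) < k + 1) hratio
  rw [show (k : ℝ) + 1 + 2 = k + 3 by ring] at h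
  -- `distortionSum w t s` and `distortionSum w t 1` unfold to the two sums of the statement
  exact h
end
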